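/- Fix n ≥ 1 and positive reals Δ₁,…,Δ_n with Δ = Δ₁⋯Δ_n. Let L_n ∈ ℝ^{n×n} have entries [L_n]_{i,i} = 12(3n−2)/(Δ_i²(3n+1)) and [L_n]_{i,j} = −36/(Δ_iΔ_j(3n+1)) for i ≠ j. Let g ∈ ℝⁿ be arbitrary and define v ∈ ℝⁿ by v_i = ∫_{R(0;d)} x_i · (gᵀx) dx, the integral over the box R(0;d) = ∏_{i=1}^n [0, Δ_i] ⊂ ℝⁿ with respect to Lebesgue measure. Then (1/Δ) · L_n · v = g. -/

import Mathlib

/-! Under the uniform distribution on the box the coordinates are independent with mean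
`Δᵢ / 2` and variance `Δᵢ² / 12`, so `∫ xᵢ xⱼ = Δ (Δᵢ Δⱼ / 4 + δᵢⱼ Δᵢ² / 12)`; that is,
`v = Δ · D (I/12 + J/4) D g` with `D = diag(Δᵢ)` and `J` the all-ones matrix. On the other
side `[Lₙ]ᵢⱼ = (12 δᵢⱼ - c) / (Δᵢ Δⱼ)` with `c = 36 / (3n + 1)`, i.e. `Lₙ = D⁻¹ (12 I - c J) D⁻¹`,
and since `J² = n J`, `(12 I - c J) (I/12 + J/4) = I + (3 - c (3n + 1) / 12) J = I`. -/

open scoped BigOperators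

noncomputable section

/-- The box `R(0;d) = ∏ᵢ [0, Δᵢ]` in Euclidean space. -/
def box {n : ℕ} (Δ : Fin n → ℝ) : Set (EuclideanSpace ℝ (Fin n)) :=
  {x | ∀ l, x l ∈ Set.Icc (0 : ℝ) (Δ l)}

/-- The limit matrix `Lₙ`. -/
def Lmat (n : ℕ) (Δ : Fin n → ℝ) : Matrix (Fin n) (Fin n) ℝ :=
  Matrix.of fun i j =>
    if i = j then 12 * (3 * (n : ℝ) - 2) / ((Δ i) ^ 2 * (3 * (n : ℝ) + 1))
    else -36 / (Δ i * Δ j * (3 * (n : ℝ) + 1))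

open MeasureTheory Set
open scoped Matrix

theorem setIntegral_univ_pi_prod {ι 𝕜 : Type*} [Fintype ι] [RCLike 𝕜] {E : ι → Type*}
    [∀ i, MeasureSpace (E i)] [∀ i, SigmaFinite (volume : Measure (E i))]
    (s : ∀ i, Set (E i)) (f : ∀ i, E i → 𝕜) :
    ∫ x in univ.pi s, ∏ i, f i (x i) = ∏ i, ∫ t in s i, f i t := by
  rw [volume_pi, Measure.restrict_pi_pi, integral_fintype_prod_eq_prod]

theorem integral_Icc_zero_pow {a : ℝ} (ha : 0 ≤ a) (k : ℕ) :
    ∫ t in Icc 0 a, t ^ k = a ^ (k + 1) / (k + 1) := by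
  rw [integral_Icc_eq_integral_Ioc, ← intervalIntegral.integral_of_le ha, integral_pow]
  simp

theorem box_eq_preimage_ofLp {n : ℕ} (Δ : Fin n → ℝ) :
    box Δ = WithLp.ofLp ⁻¹' univ.pi fun l => Icc 0 (Δ l) := by
  ext x
  simp only [box, mem_ofPred_eq, mem_preimage, mem_univ_pi]

theorem setIntegral_box_eq {n : ℕ} {E : Type*} [NormedAddCommGroup E] [NormedSpace ℝ E]
    (Δ : Fin n → ℝ) (F : (Fin n → ℝ) → E) :
    ∫ x in box Δ, F (WithLp.ofLp x) = ∫ y in univ.pi fun l => Icc 0 (Δ l), F y := by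
  rw [box_eq_preimage_ofLp]
  exact (PiLp.volume_preserving_ofLp (Fin n)).setIntegral_preimage_emb
    (MeasurableEquiv.toLp 2 (Fin n → ℝ)).symm.measurableEmbedding F
    (univ.pi fun l => Icc 0 (Δ l))

theorem isCompact_box {n : ℕ} (Δ : Fin n → ℝ) : IsCompact (box Δ) := by
  rw [box_eq_preimage_ofLp]
  exact (PiLp.homeomorph 2 fun _ : Fin n => ℝ).isCompact_preimage.mpr
    (isCompact_univ_pi fun _ => isCompact_Icc)

theorem setIntegral_box_prod_pow {n : ℕ} {Δ : Fin n → ℝ} (hΔ : ∀ l, 0 ≤ Δ l) (k : Fin n → ℕ) :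
    ∫ x in box Δ, ∏ l, x l ^ k l = ∏ l, Δ l ^ (k l + 1) / (k l + 1) := by
  rw [setIntegral_box_eq Δ fun y => ∏ l, y l ^ k l]
  refine (setIntegral_univ_pi_prod _ fun l t => t ^ k l).trans ?_
  exact Finset.prod_congr rfl fun l _ => integral_Icc_zero_pow (hΔ l) (k l)

theorem prod_apply_single_add_single {ι M : Type*} [Fintype ι] [DecidableEq ι] [CommMonoid M]
    (F : ι → ℕ → M) (hF : ∀ l, F l 0 = 1) (i j : ι) :
    ∏ l, F l ((Pi.single i 1 : ι → ℕ) l + (Pi.single j 1 : ι → ℕ) l) =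
      if i = j then F i 2 else F i 1 * F j 1 := by
  split_ifs with hij
  · subst hij
    rw [Fintype.prod_eq_single i fun l hl => by simp [hl, hF]]
    simp
  · rw [Fintype.prod_eq_mul i j hij fun l hl => by simp [hl.1, hl.2, hF]]
    simp [hij, Ne.symm hij]

theorem setIntegral_box_mul {n : ℕ} {Δ : Fin n → ℝ} (hΔ : ∀ l, 0 ≤ Δ l) (i j : Fin n) :
    ∫ x in box Δ, x i * x j =
      (∏ l, Δ l) * (Δ i * Δ j / 4 + if i = j then Δ i ^ 2 / 12 else 0) := by
  set k : Fin n → ℕ := fun l => (Pi.single i 1 : Fin n → ℕ) l + (Pi.single j 1 : Fin n → ℕ) l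
  have hmonomial (x : EuclideanSpace ℝ (Fin n)) : x i * x j = ∏ l, x l ^ k l := by
    rw [prod_apply_single_add_single (fun l m => x l ^ m) (fun _ => pow_zero _)]
    split_ifs with hij
    · rw [hij, sq]
    · rw [pow_one, pow_one]
  have hcoeff : ∏ l, Δ l ^ k l / (k l + 1) =
      if i = j then Δ i ^ 2 / 3 else Δ i / 2 * (Δ j / 2) := by
    rw [prod_apply_single_add_single (fun l m => Δ l ^ m / ((m : ℝ) + 1)) (fun _ => by simp)]
    norm_num
  calc ∫ x in box Δ, x i * x j = ∫ x in box Δ, ∏ l, x l ^ k l := by simp_rw [hmonomial]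
    _ = ∏ l, Δ l ^ (k l + 1) / (k l + 1) := setIntegral_box_prod_pow hΔ k
    _ = (∏ l, Δ l) * ∏ l, Δ l ^ k l / (k l + 1) := by
      rw [← Finset.prod_mul_distrib]
      exact Finset.prod_congr rfl fun l _ => by ring
    _ = (∏ l, Δ l) * (Δ i * Δ j / 4 + if i = j then Δ i ^ 2 / 12 else 0) := by
      rw [hcoeff]
      split_ifs with hij
      · rw [hij]; ring
      · ring

theorem setIntegral_box_mul_sum_mul {n : ℕ} {Δ : Fin n → ℝ} (hΔ : ∀ l, 0 ≤ Δ l) (g : Fin n → ℝ)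
    (i : Fin n) :
    ∫ x in box Δ, x i * ∑ j, g j * x j =
      (∏ l, Δ l) * (Δ i * (∑ j, g j * Δ j) / 4 + g i * Δ i ^ 2 / 12) := by
  have hint (j : Fin n) :
      IntegrableOn (fun x : EuclideanSpace ℝ (Fin n) => g j * (x i * x j)) (box Δ) :=
    (by fun_prop : Continuous fun x : EuclideanSpace ℝ (Fin n) => g j * (x i * x j))
      |>.continuousOn.integrableOn_compact (isCompact_box Δ)
  have hterm (j : Fin n) :
      g j * ((∏ l, Δ l) * (Δ i * Δ j / 4 + if i = j then Δ i ^ 2 / 12 else 0)) =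
          (∏ l, Δ l) * Δ i / 4 * (g j * Δ j) +
          if i = j then (∏ l, Δ l) * (g i * Δ i ^ 2 / 12) else 0 := by
    split_ifs with hij
    · rw [hij]; ring
    · ring
  calc ∫ x in box Δ, x i * ∑ j, g j * x j = ∑ j, g j * ∫ x in box Δ, x i * x j := by
        simp_rw [Finset.mul_sum, mul_left_comm (_ : ℝ) (g _)]
        rw [integral_finsetSum _ fun j _ => hint j]
        simp_rw [integral_const_mul]
    _ = (∏ l, Δ l) * (Δ i * (∑ j, g j * Δ j) / 4 + g i * Δ i ^ 2 / 12) := by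
        simp only [setIntegral_box_mul hΔ, hterm, Finset.sum_add_distrib, Finset.sum_ite_eq,
          Finset.mem_univ, if_true]
        rw [← Finset.mul_sum]
        ring

theorem Lmat_apply {n : ℕ} (Δ : Fin n → ℝ) (i j : Fin n) :
    Lmat n Δ i j = ((if i = j then 12 else 0) - 36 / (3 * n + 1)) / (Δ i * Δ j) := by
  have h : (3 * (n : ℝ) + 1) ≠ 0 := by positivity
  simp only [Lmat, Matrix.of_apply]
  split_ifs with hij
  · subst hij
    field_simp
    ring
  · field_simp
    ring

theorem Lmat_mulVec {n : ℕ} {Δ : Fin n → ℝ} (hΔ : ∀ l, Δ l ≠ 0) (g : Fin n → ℝ) :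
    Lmat n Δ *ᵥ (fun i => Δ i * (∑ j, g j * Δ j) / 4 + g i * Δ i ^ 2 / 12) = g := by
  ext i
  set S := ∑ j, g j * Δ j with hS
  have hterm (j : Fin n) : Lmat n Δ i j * (Δ j * S / 4 + g j * Δ j ^ 2 / 12) =
      ((if i = j then 12 else 0) - 36 / (3 * n + 1)) * (S / 4 + g j * Δ j / 12) / Δ i := by
    rw [Lmat_apply]
    field_simp [hΔ i, hΔ j]
  have hsum : ∑ j, ((if i = j then 12 else 0) - 36 / (3 * n + 1)) * (S / 4 + g j * Δ j / 12) =
      g i * Δ i := by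
    have h : (3 * (n : ℝ) + 1) ≠ 0 := by positivity
    simp only [sub_mul, Finset.sum_sub_distrib, ite_mul, zero_mul, Finset.sum_ite_eq,
      Finset.mem_univ, if_true, ← Finset.mul_sum, Finset.sum_add_distrib, ← Finset.sum_div,
      Finset.sum_const, Finset.card_univ, Fintype.card_fin, nsmul_eq_mul, ← hS]
    field_simp
    ring
  simp only [Matrix.mulVec, dotProduct, hterm, ← Finset.sum_div, hsum]
  field_simp [hΔ i]

theorem Ln_v_eq_g
    (n : ℕ)
    (Δ : Fin n → ℝ) (hΔ : ∀ i, 0 < Δ i)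
    (g : Fin n → ℝ) (v : Fin n → ℝ)
    (hv : ∀ i, v i = ∫ x in box Δ, x i * ∑ j, g j * x j) :
    (∏ l, Δ l)⁻¹ • Matrix.mulVec (Lmat n Δ) v = g := by
  have hv' : v = (∏ l, Δ l) • fun i => Δ i * (∑ j, g j * Δ j) / 4 + g i * Δ i ^ 2 / 12 := by
    funext i
    rw [hv, setIntegral_box_mul_sum_mul (fun l => (hΔ l).le)]
    rfl
  have hvol : ∏ l, Δ l ≠ 0 := (Finset.prod_pos fun l _ => hΔ l).ne'
  rw [hv', Matrix.mulVec_smul, smul_smul, inv_mul_cancel₀ hvol, one_smul]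
  exact Lmat_mulVec (fun l => (hΔ l).ne') g

end
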